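/- arXiv:2308.15715 — 3 statements merged into one kernel-verified Lean document; each statement's English description precedes it below -/
import Mathlib

section
/- Let T > 0 and let E : [0, T] → ℝ be twice continuously differentiable with E(t) ≥ 0 and (E′(t))² ≤ E(t)·E″(t) for every t ∈ [0, T]. If E(T) = 0, then E(t) = 0 for every t ∈ [0, T]. -/
open Set

/-- Core backward-in-time vanishing argument in the proof of Theorem 3.1:
a nonnegative, twice continuously differentiable function `E` on `[0, T]` satisfying the
logarithmic-convexity differential inequality `(E′)² ≤ E·E″` that vanishes at time `T`
must vanish identically on `[0, T]`. -/
theorem stmt_1 (T : ℝ) (hT : 0 < T) (E E' E'' : ℝ → ℝ)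
    (hE' : ∀ t ∈ Icc (0 : ℝ) T, HasDerivWithinAt E (E' t) (Icc (0 : ℝ) T) t)
    (hE'' : ∀ t ∈ Icc (0 : ℝ) T, HasDerivWithinAt E' (E'' t) (Icc (0 : ℝ) T) t)
    (hE''cont : ContinuousOn E'' (Icc (0 : ℝ) T))
    (hEnonneg : ∀ t ∈ Icc (0 : ℝ) T, 0 ≤ E t)
    (hineq : ∀ t ∈ Icc (0 : ℝ) T, (E' t) ^ 2 ≤ E t * E'' t)
    (hET : E T = 0) :
    ∀ t ∈ Icc (0 : ℝ) T, E t = 0 := by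
  have hEc : ContinuousOn E (Icc 0 T) := fun t ht => (hE' t ht).continuousWithinAt
  have hE'c : ContinuousOn E' (Icc 0 T) := fun t ht => (hE'' t ht).continuousWithinAt
  by_contra hcon
  push_neg at hcon
  obtain ⟨t0, ht0, hEt0⟩ := hcon
  have hEt0pos : 0 < E t0 := lt_of_le_of_ne (hEnonneg t0 ht0) (Ne.symm hEt0)
  set S : Set ℝ := Icc t0 T ∩ E ⁻¹' {0} with hSdef
  have hTS : T ∈ S := ⟨⟨ht0.2, le_refl T⟩, hET⟩
  have hSne : S.Nonempty := ⟨T, hTS⟩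
  have hSbdd : BddBelow S := ⟨t0, fun s hs => hs.1.1⟩
  have hSclosed : IsClosed S := by
    have h1 : ContinuousOn E (Icc t0 T) := hEc.mono (Icc_subset_Icc ht0.1 le_rfl)
    exact h1.preimage_isClosed_of_isClosed isClosed_Icc (isClosed_singleton (x := (0:ℝ)))
  set b := sInf S with hbdef
  have hbS : b ∈ S := hSclosed.csInf_mem hSne hSbdd
  have hEb : E b = 0 := hbS.2
  have ht0b : t0 ≤ b := hbS.1.1
  have hbT : b ≤ T := hbS.1.2
  have ht0b' : t0 < b := lt_of_le_of_ne ht0b (fun h => hEt0 (by rw [h]; exact hEb))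
  have hsubIcc : Icc t0 b ⊆ Icc 0 T := Icc_subset_Icc ht0.1 hbT
  have hpos : ∀ s ∈ Ico t0 b, 0 < E s := by
    intro s hs
    have hsIcc : s ∈ Icc (0:ℝ) T := ⟨le_trans ht0.1 hs.1, le_trans hs.2.le hbT⟩
    by_contra hnot
    have h0 : E s = 0 := le_antisymm (not_lt.mp hnot) (hEnonneg s hsIcc)
    have hmem : s ∈ S := ⟨⟨hs.1, hsIcc.2⟩, h0⟩
    exact absurd (csInf_le hSbdd hmem) (not_le.mpr hs.2)
  set c := E' t0 / E t0 with hcdef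
  -- Step A: the logarithmic derivative is bounded below by c on [t0, b)
  have hg : ∀ x ∈ Ico t0 b, c * E x ≤ E' x := by
    intro x hx
    have hsub1 : Icc t0 x ⊆ Ico t0 b := fun y hy => ⟨hy.1, lt_of_le_of_lt hy.2 hx.2⟩
    have hsub2 : Icc t0 x ⊆ Icc 0 T := fun y hy => hsubIcc ⟨hy.1, le_of_lt (lt_of_le_of_lt hy.2 hx.2)⟩
    have hcont : ContinuousOn (fun t => E' t / E t) (Icc t0 x) :=
      (hE'c.mono hsub2).div (hEc.mono hsub2) (fun y hy => (hpos y (hsub1 hy)).ne')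
    have hderiv : ∀ y ∈ Ioo t0 x, HasDerivAt (fun t => E' t / E t)
        ((E'' y * E y - E' y * E' y) / (E y) ^ 2) y := by
      intro y hy
      have hyI : y ∈ Icc (0:ℝ) T := hsub2 ⟨hy.1.le, hy.2.le⟩
      have hyO : Icc (0:ℝ) T ∈ nhds y := by
        refine Icc_mem_nhds (lt_of_le_of_lt ht0.1 hy.1) ?_
        exact lt_of_lt_of_le (lt_of_lt_of_le hy.2 (le_of_lt hx.2)) hbT
      have h1 : HasDerivAt E' (E'' y) y := (hE'' y hyI).hasDerivAt hyO
      have h2 : HasDerivAt E (E' y) y := (hE' y hyI).hasDerivAt hyO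
      exact h1.div h2 (hpos y (hsub1 ⟨hy.1.le, hy.2.le⟩)).ne'
    have hmono : MonotoneOn (fun t => E' t / E t) (Icc t0 x) := by
      apply monotoneOn_of_deriv_nonneg (convex_Icc _ _) hcont
      · intro y hy
        rw [interior_Icc] at hy
        exact (hderiv y hy).differentiableAt.differentiableWithinAt
      · intro y hy
        rw [interior_Icc] at hy
        rw [(hderiv y hy).deriv]
        apply div_nonneg _ (sq_nonneg _)
        have := hineq y (hsub2 ⟨hy.1.le, hy.2.le⟩)
        nlinarith
    have hle : E' t0 / E t0 ≤ E' x / E x :=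
      hmono ⟨le_refl t0, hx.1⟩ ⟨hx.1, le_refl x⟩ hx.1
    have hEx : 0 < E x := hpos x hx
    calc c * E x ≤ (E' x / E x) * E x := by
          exact mul_le_mul_of_nonneg_right hle hEx.le
      _ = E' x := div_mul_cancel₀ _ hEx.ne'
  -- Step B: E t * exp (-(c*t)) is monotone on [t0, b]
  set h : ℝ → ℝ := fun t => E t * Real.exp (-(c * t)) with hhdef
  have hderivh : ∀ y ∈ Ioo t0 b, HasDerivAt h
      (E' y * Real.exp (-(c * y)) + E y * (Real.exp (-(c * y)) * -(c * 1))) y := by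
    intro y hy
    have hyI : y ∈ Icc (0:ℝ) T := hsubIcc ⟨hy.1.le, hy.2.le⟩
    have hyO : Icc (0:ℝ) T ∈ nhds y :=
      Icc_mem_nhds (lt_of_le_of_lt ht0.1 hy.1) (lt_of_lt_of_le hy.2 hbT)
    have h2 : HasDerivAt E (E' y) y := (hE' y hyI).hasDerivAt hyO
    have h3 : HasDerivAt (fun t : ℝ => -(c * t)) (-(c * 1)) y :=
      ((hasDerivAt_id y).const_mul c).neg
    have h4 : HasDerivAt (fun t : ℝ => Real.exp (-(c * t)))
        (Real.exp (-(c * y)) * -(c * 1)) y := h3.exp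
    exact h2.mul h4
  have hmonoh : MonotoneOn h (Icc t0 b) := by
    apply monotoneOn_of_deriv_nonneg (convex_Icc _ _)
    · exact (hEc.mono hsubIcc).mul (Real.continuous_exp.comp (by continuity)).continuousOn
    · intro y hy
      rw [interior_Icc] at hy
      exact (hderivh y hy).differentiableAt.differentiableWithinAt
    · intro y hy
      rw [interior_Icc] at hy
      rw [(hderivh y hy).deriv]
      have hgy := hg y ⟨hy.1.le, hy.2⟩
      have hexp : 0 < Real.exp (-(c * y)) := Real.exp_pos _
      nlinarith
  have hfinal : h t0 ≤ h b :=
    hmonoh ⟨le_refl t0, ht0b⟩ ⟨ht0b, le_refl b⟩ ht0b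
  have : h b = 0 := by simp [hhdef, hEb]
  have hpos0 : 0 < h t0 := mul_pos hEt0pos (Real.exp_pos _)
  linarith
end

section
/- Under the homogeneous DPP difference system with the stated regularity, boundary-condition encodings (H1)–(H2), and energy E(t), the derivative of the energy satisfies, for every t ∈ [0,T]: E′(t) = − ∫_Ω μ (K₁⁻¹(x) w₁(x,t))·w₁(x,t) dx − ∫_Ω μ (K₂⁻¹(x) w₂(x,t))·w₂(x,t) dx − ∫_Ω (β/μ) (q₁(x,t) − q₂(x,t))² dx. -/
/-!
Differentiating under the integral sign, `E'(t) = ∑ᵢ ∫_Ω (γ/φᵢ) ∂ₜwᵢ·wᵢ`. Testing the momentum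
equation with `wᵢ` turns this integrand into `-μ (Kᵢ⁻¹wᵢ)·wᵢ - wᵢ·∇qᵢ`, and (H1) trades
`∫ wᵢ·∇qᵢ` for `-∫ qᵢ div wᵢ`. The mass-exchange equations then give
`q₁ div w₁ + q₂ div w₂ = -(β/μ)(q₁ - q₂)²`. Every integrand is continuous and bounded on the
bounded set `Ω`, which is all the integrability the argument needs.
-/

open Set MeasureTheory Matrix

/-- Divergence associated with a (spatial) Jacobian, i.e. the trace of the Fréchet
derivative of a vector field on ℝ³. -/
noncomputable def divOf (J : (Fin 3 → ℝ) →L[ℝ] (Fin 3 → ℝ)) : ℝ :=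
  ∑ j : Fin 3, J (Pi.single j 1) j

/-- The continuous linear map `v ↦ g · v` associated with a gradient vector `g`;
`HasFDerivAt q (gradCLM g) x` says `g` is the spatial gradient of `q` at `x`. -/
noncomputable def gradCLM (g : Fin 3 → ℝ) : (Fin 3 → ℝ) →L[ℝ] ℝ :=
  ∑ j : Fin 3, g j • (ContinuousLinearMap.proj j : (Fin 3 → ℝ) →L[ℝ] ℝ)

/-- The homogeneous double porosity/permeability (DPP) difference system on a bounded open
domain `Ω ⊆ ℝ³` and time interval `[0,T]`, together with all the regularity assumptions and
the boundary-condition encodings (H1)–(H2) described in the paper.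

Fields `w₁, w₂` (velocity differences) and `q₁, q₂` (pressure differences) satisfy
`(γ/φᵢ) ∂wᵢ/∂t + μ Kᵢ⁻¹ wᵢ + ∇qᵢ = 0`, `div w₁ = −(β/μ)(q₁−q₂)`, `div w₂ = +(β/μ)(q₁−q₂)`.
The time derivatives `dwᵢ, dqᵢ`, the spatial gradients `gqᵢ`, and the spatial Jacobians
`Jwᵢ, Jdwᵢ` (whose traces are the divergences of `wᵢ` and of `∂wᵢ/∂t`) are carried as data,
tied to the fields by `HasDerivWithinAt`/`HasFDerivAt` hypotheses. The hypothesis `leibniz`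
expresses that differentiation in `t` under the integral over `Ω` is valid (for continuous
bounded integrands with continuous bounded time derivatives). -/
structure DPP where
  Ω : Set (Fin 3 → ℝ)
  hΩopen : IsOpen Ω
  hΩbdd : Bornology.IsBounded Ω
  T : ℝ
  hT : 0 < T
  γ : ℝ
  μ : ℝ
  β : ℝ
  hγ : 0 < γ
  hμ : 0 < μ
  hβ : 0 < β
  φ₁ : (Fin 3 → ℝ) → ℝ
  φ₂ : (Fin 3 → ℝ) → ℝ
  hφ₁pos : ∀ x ∈ Ω, 0 < φ₁ x
  hφ₂pos : ∀ x ∈ Ω, 0 < φ₂ x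
  hφ₁cont : ContinuousOn φ₁ Ω
  hφ₂cont : ContinuousOn φ₂ Ω
  hφ₁bdd : ∃ c > (0:ℝ), ∃ C : ℝ, ∀ x ∈ Ω, c ≤ φ₁ x ∧ φ₁ x ≤ C
  hφ₂bdd : ∃ c > (0:ℝ), ∃ C : ℝ, ∀ x ∈ Ω, c ≤ φ₂ x ∧ φ₂ x ≤ C
  K₁ : (Fin 3 → ℝ) → Matrix (Fin 3) (Fin 3) ℝ
  K₂ : (Fin 3 → ℝ) → Matrix (Fin 3) (Fin 3) ℝ
  hK₁symm : ∀ x ∈ Ω, (K₁ x).IsSymm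
  hK₂symm : ∀ x ∈ Ω, (K₂ x).IsSymm
  hK₁pd : ∀ x ∈ Ω, (K₁ x).PosDef
  hK₂pd : ∀ x ∈ Ω, (K₂ x).PosDef
  hK₁invcont : ∀ i j, ContinuousOn (fun x => (K₁ x)⁻¹ i j) Ω
  hK₂invcont : ∀ i j, ContinuousOn (fun x => (K₂ x)⁻¹ i j) Ω
  hK₁invbdd : ∃ C : ℝ, ∀ x ∈ Ω, ∀ i j, |(K₁ x)⁻¹ i j| ≤ C
  hK₂invbdd : ∃ C : ℝ, ∀ x ∈ Ω, ∀ i j, |(K₂ x)⁻¹ i j| ≤ C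
  -- the fields of the difference system
  w₁ : (Fin 3 → ℝ) → ℝ → (Fin 3 → ℝ)
  w₂ : (Fin 3 → ℝ) → ℝ → (Fin 3 → ℝ)
  q₁ : (Fin 3 → ℝ) → ℝ → ℝ
  q₂ : (Fin 3 → ℝ) → ℝ → ℝ
  -- derivative data: time derivatives, spatial gradients, spatial Jacobians
  dw₁ : (Fin 3 → ℝ) → ℝ → (Fin 3 → ℝ)
  dw₂ : (Fin 3 → ℝ) → ℝ → (Fin 3 → ℝ)
  dq₁ : (Fin 3 → ℝ) → ℝ → ℝ
  dq₂ : (Fin 3 → ℝ) → ℝ → ℝ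
  gq₁ : (Fin 3 → ℝ) → ℝ → (Fin 3 → ℝ)
  gq₂ : (Fin 3 → ℝ) → ℝ → (Fin 3 → ℝ)
  Jw₁ : (Fin 3 → ℝ) → ℝ → ((Fin 3 → ℝ) →L[ℝ] (Fin 3 → ℝ))
  Jw₂ : (Fin 3 → ℝ) → ℝ → ((Fin 3 → ℝ) →L[ℝ] (Fin 3 → ℝ))
  Jdw₁ : (Fin 3 → ℝ) → ℝ → ((Fin 3 → ℝ) →L[ℝ] (Fin 3 → ℝ))
  Jdw₂ : (Fin 3 → ℝ) → ℝ → ((Fin 3 → ℝ) →L[ℝ] (Fin 3 → ℝ))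
  -- C¹ regularity in time: the data are the actual derivatives
  hdw₁ : ∀ x ∈ Ω, ∀ t ∈ Icc (0:ℝ) T, HasDerivWithinAt (w₁ x) (dw₁ x t) (Icc (0:ℝ) T) t
  hdw₂ : ∀ x ∈ Ω, ∀ t ∈ Icc (0:ℝ) T, HasDerivWithinAt (w₂ x) (dw₂ x t) (Icc (0:ℝ) T) t
  hdq₁ : ∀ x ∈ Ω, ∀ t ∈ Icc (0:ℝ) T, HasDerivWithinAt (q₁ x) (dq₁ x t) (Icc (0:ℝ) T) t
  hdq₂ : ∀ x ∈ Ω, ∀ t ∈ Icc (0:ℝ) T, HasDerivWithinAt (q₂ x) (dq₂ x t) (Icc (0:ℝ) T) t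
  -- C¹ regularity in space: gradients and Jacobians
  hgq₁ : ∀ t ∈ Icc (0:ℝ) T, ∀ x ∈ Ω, HasFDerivAt (fun y => q₁ y t) (gradCLM (gq₁ x t)) x
  hgq₂ : ∀ t ∈ Icc (0:ℝ) T, ∀ x ∈ Ω, HasFDerivAt (fun y => q₂ y t) (gradCLM (gq₂ x t)) x
  hJw₁ : ∀ t ∈ Icc (0:ℝ) T, ∀ x ∈ Ω, HasFDerivAt (fun y => w₁ y t) (Jw₁ x t) x
  hJw₂ : ∀ t ∈ Icc (0:ℝ) T, ∀ x ∈ Ω, HasFDerivAt (fun y => w₂ y t) (Jw₂ x t) x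
  hJdw₁ : ∀ t ∈ Icc (0:ℝ) T, ∀ x ∈ Ω, HasFDerivAt (fun y => dw₁ y t) (Jdw₁ x t) x
  hJdw₂ : ∀ t ∈ Icc (0:ℝ) T, ∀ x ∈ Ω, HasFDerivAt (fun y => dw₂ y t) (Jdw₂ x t) x
  -- `div (∂wᵢ/∂t) = ∂(div wᵢ)/∂t`
  hdivcomm₁ : ∀ x ∈ Ω, ∀ t ∈ Icc (0:ℝ) T,
    HasDerivWithinAt (fun s => divOf (Jw₁ x s)) (divOf (Jdw₁ x t)) (Icc (0:ℝ) T) t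
  hdivcomm₂ : ∀ x ∈ Ω, ∀ t ∈ Icc (0:ℝ) T,
    HasDerivWithinAt (fun s => divOf (Jw₂ x s)) (divOf (Jdw₂ x t)) (Icc (0:ℝ) T) t
  -- joint continuity of the fields and of their appearing first derivatives
  hw₁cont : ContinuousOn (fun p : (Fin 3 → ℝ) × ℝ => w₁ p.1 p.2) (Ω ×ˢ Icc (0:ℝ) T)
  hw₂cont : ContinuousOn (fun p : (Fin 3 → ℝ) × ℝ => w₂ p.1 p.2) (Ω ×ˢ Icc (0:ℝ) T)
  hq₁cont : ContinuousOn (fun p : (Fin 3 → ℝ) × ℝ => q₁ p.1 p.2) (Ω ×ˢ Icc (0:ℝ) T)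
  hq₂cont : ContinuousOn (fun p : (Fin 3 → ℝ) × ℝ => q₂ p.1 p.2) (Ω ×ˢ Icc (0:ℝ) T)
  hdw₁cont : ContinuousOn (fun p : (Fin 3 → ℝ) × ℝ => dw₁ p.1 p.2) (Ω ×ˢ Icc (0:ℝ) T)
  hdw₂cont : ContinuousOn (fun p : (Fin 3 → ℝ) × ℝ => dw₂ p.1 p.2) (Ω ×ˢ Icc (0:ℝ) T)
  hdq₁cont : ContinuousOn (fun p : (Fin 3 → ℝ) × ℝ => dq₁ p.1 p.2) (Ω ×ˢ Icc (0:ℝ) T)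
  hdq₂cont : ContinuousOn (fun p : (Fin 3 → ℝ) × ℝ => dq₂ p.1 p.2) (Ω ×ˢ Icc (0:ℝ) T)
  hgq₁cont : ContinuousOn (fun p : (Fin 3 → ℝ) × ℝ => gq₁ p.1 p.2) (Ω ×ˢ Icc (0:ℝ) T)
  hgq₂cont : ContinuousOn (fun p : (Fin 3 → ℝ) × ℝ => gq₂ p.1 p.2) (Ω ×ˢ Icc (0:ℝ) T)
  hdivw₁cont : ContinuousOn (fun p : (Fin 3 → ℝ) × ℝ => divOf (Jw₁ p.1 p.2)) (Ω ×ˢ Icc (0:ℝ) T)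
  hdivw₂cont : ContinuousOn (fun p : (Fin 3 → ℝ) × ℝ => divOf (Jw₂ p.1 p.2)) (Ω ×ˢ Icc (0:ℝ) T)
  hdivdw₁cont : ContinuousOn (fun p : (Fin 3 → ℝ) × ℝ => divOf (Jdw₁ p.1 p.2)) (Ω ×ˢ Icc (0:ℝ) T)
  hdivdw₂cont : ContinuousOn (fun p : (Fin 3 → ℝ) × ℝ => divOf (Jdw₂ p.1 p.2)) (Ω ×ˢ Icc (0:ℝ) T)
  -- boundedness of the fields and of their appearing first derivatives
  hw₁bdd : ∃ C : ℝ, ∀ x ∈ Ω, ∀ t ∈ Icc (0:ℝ) T, ‖w₁ x t‖ ≤ C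
  hw₂bdd : ∃ C : ℝ, ∀ x ∈ Ω, ∀ t ∈ Icc (0:ℝ) T, ‖w₂ x t‖ ≤ C
  hq₁bdd : ∃ C : ℝ, ∀ x ∈ Ω, ∀ t ∈ Icc (0:ℝ) T, |q₁ x t| ≤ C
  hq₂bdd : ∃ C : ℝ, ∀ x ∈ Ω, ∀ t ∈ Icc (0:ℝ) T, |q₂ x t| ≤ C
  hdw₁bdd : ∃ C : ℝ, ∀ x ∈ Ω, ∀ t ∈ Icc (0:ℝ) T, ‖dw₁ x t‖ ≤ C
  hdw₂bdd : ∃ C : ℝ, ∀ x ∈ Ω, ∀ t ∈ Icc (0:ℝ) T, ‖dw₂ x t‖ ≤ C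
  hdq₁bdd : ∃ C : ℝ, ∀ x ∈ Ω, ∀ t ∈ Icc (0:ℝ) T, |dq₁ x t| ≤ C
  hdq₂bdd : ∃ C : ℝ, ∀ x ∈ Ω, ∀ t ∈ Icc (0:ℝ) T, |dq₂ x t| ≤ C
  hgq₁bdd : ∃ C : ℝ, ∀ x ∈ Ω, ∀ t ∈ Icc (0:ℝ) T, ‖gq₁ x t‖ ≤ C
  hgq₂bdd : ∃ C : ℝ, ∀ x ∈ Ω, ∀ t ∈ Icc (0:ℝ) T, ‖gq₂ x t‖ ≤ C
  hdivw₁bdd : ∃ C : ℝ, ∀ x ∈ Ω, ∀ t ∈ Icc (0:ℝ) T, |divOf (Jw₁ x t)| ≤ C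
  hdivw₂bdd : ∃ C : ℝ, ∀ x ∈ Ω, ∀ t ∈ Icc (0:ℝ) T, |divOf (Jw₂ x t)| ≤ C
  hdivdw₁bdd : ∃ C : ℝ, ∀ x ∈ Ω, ∀ t ∈ Icc (0:ℝ) T, |divOf (Jdw₁ x t)| ≤ C
  hdivdw₂bdd : ∃ C : ℝ, ∀ x ∈ Ω, ∀ t ∈ Icc (0:ℝ) T, |divOf (Jdw₂ x t)| ≤ C
  -- the homogeneous DPP difference system
  pde₁ : ∀ x ∈ Ω, ∀ t ∈ Icc (0:ℝ) T,
    (γ / φ₁ x) • dw₁ x t + μ • ((K₁ x)⁻¹ *ᵥ w₁ x t) + gq₁ x t = 0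
  pde₂ : ∀ x ∈ Ω, ∀ t ∈ Icc (0:ℝ) T,
    (γ / φ₂ x) • dw₂ x t + μ • ((K₂ x)⁻¹ *ᵥ w₂ x t) + gq₂ x t = 0
  mass₁ : ∀ x ∈ Ω, ∀ t ∈ Icc (0:ℝ) T, divOf (Jw₁ x t) = -(β / μ) * (q₁ x t - q₂ x t)
  mass₂ : ∀ x ∈ Ω, ∀ t ∈ Icc (0:ℝ) T, divOf (Jw₂ x t) = (β / μ) * (q₁ x t - q₂ x t)
  -- boundary-condition encodings (H1)–(H2)
  H1₁ : ∀ t ∈ Icc (0:ℝ) T,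
    (∫ x in Ω, (w₁ x t ⬝ᵥ gq₁ x t + q₁ x t * divOf (Jw₁ x t))) = 0
  H1₂ : ∀ t ∈ Icc (0:ℝ) T,
    (∫ x in Ω, (w₂ x t ⬝ᵥ gq₂ x t + q₂ x t * divOf (Jw₂ x t))) = 0
  H2₁ : ∀ t ∈ Icc (0:ℝ) T,
    (∫ x in Ω, (dw₁ x t ⬝ᵥ gq₁ x t + q₁ x t * divOf (Jdw₁ x t))) = 0
  H2₂ : ∀ t ∈ Icc (0:ℝ) T,
    (∫ x in Ω, (dw₂ x t ⬝ᵥ gq₂ x t + q₂ x t * divOf (Jdw₂ x t))) = 0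
  -- differentiation in `t` under the integral over `Ω` is valid
  leibniz : ∀ F F' : (Fin 3 → ℝ) → ℝ → ℝ,
    (∀ x ∈ Ω, ∀ t ∈ Icc (0:ℝ) T, HasDerivWithinAt (F x) (F' x t) (Icc (0:ℝ) T) t) →
    ContinuousOn (fun p : (Fin 3 → ℝ) × ℝ => F p.1 p.2) (Ω ×ˢ Icc (0:ℝ) T) →
    ContinuousOn (fun p : (Fin 3 → ℝ) × ℝ => F' p.1 p.2) (Ω ×ˢ Icc (0:ℝ) T) →
    (∃ C : ℝ, ∀ x ∈ Ω, ∀ t ∈ Icc (0:ℝ) T, |F x t| ≤ C) →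
    (∃ C : ℝ, ∀ x ∈ Ω, ∀ t ∈ Icc (0:ℝ) T, |F' x t| ≤ C) →
    ∀ t ∈ Icc (0:ℝ) T,
      HasDerivWithinAt (fun s => ∫ x in Ω, F x s) (∫ x in Ω, F' x t) (Icc (0:ℝ) T) t

/-- The (kinetic) energy `E(t) = ∫_Ω [ γ/(2φ₁) |w₁|² + γ/(2φ₂) |w₂|² ] dx` of the
difference system. -/
noncomputable def DPP.E (S : DPP) : ℝ → ℝ := fun t =>
  ∫ x in S.Ω, ((S.γ / (2 * S.φ₁ x)) * (S.w₁ x t ⬝ᵥ S.w₁ x t)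
    + (S.γ / (2 * S.φ₂ x)) * (S.w₂ x t ⬝ᵥ S.w₂ x t))

def BoundedContinuousOn {X E : Type*} [TopologicalSpace X] [Norm E] [TopologicalSpace E]
    (f : X → E) (s : Set X) : Prop :=
  ContinuousOn f s ∧ ∃ C, ∀ x ∈ s, ‖f x‖ ≤ C

namespace BoundedContinuousOn

variable {X Y E : Type*} [TopologicalSpace X] [TopologicalSpace Y] [SeminormedAddCommGroup E]
  {s : Set X}

theorem const (c : E) : BoundedContinuousOn (fun _ => c) s :=
  ⟨continuousOn_const, ‖c‖, fun _ _ => le_rfl⟩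

theorem congr {f g : X → E} (hf : BoundedContinuousOn f s) (hfg : EqOn g f s) :
    BoundedContinuousOn g s :=
  ⟨hf.1.congr hfg, hf.2.imp fun _ hC x hx => hfg hx ▸ hC x hx⟩

theorem comp {f : X → E} {g : Y → X} {t : Set Y}
    (hf : BoundedContinuousOn f s) (hg : ContinuousOn g t) (hgst : MapsTo g t s) :
    BoundedContinuousOn (fun y => f (g y)) t :=
  ⟨hf.1.comp hg hgst, hf.2.imp fun _ hC y hy => hC (g y) (hgst hy)⟩

theorem comp_fst {f : X → E} (hf : BoundedContinuousOn f s) (t : Set Y) :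
    BoundedContinuousOn (fun p : X × Y => f p.1) (s ×ˢ t) :=
  hf.comp continuousOn_fst fun _ hp => hp.1

theorem curry_left {f : X × Y → E} {t : Set Y}
    (hf : BoundedContinuousOn f (s ×ˢ t)) {y : Y} (hy : y ∈ t) :
    BoundedContinuousOn (fun x => f (x, y)) s :=
  hf.comp (continuous_id.prodMk continuous_const).continuousOn fun _ hx => ⟨hx, hy⟩

theorem uncurry_of_bound {f : X → Y → E} {t : Set Y}
    (hf : ContinuousOn (fun p : X × Y => f p.1 p.2) (s ×ˢ t))
    (hC : ∃ C, ∀ x ∈ s, ∀ y ∈ t, ‖f x y‖ ≤ C) :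
    BoundedContinuousOn (fun p : X × Y => f p.1 p.2) (s ×ˢ t) :=
  ⟨hf, hC.imp fun _ hC p hp => hC p.1 hp.1 p.2 hp.2⟩

theorem add {f g : X → E} (hf : BoundedContinuousOn f s) (hg : BoundedContinuousOn g s) :
    BoundedContinuousOn (fun x => f x + g x) s := by
  obtain ⟨hf, C, hC⟩ := hf
  obtain ⟨hg, D, hD⟩ := hg
  exact ⟨hf.add hg, C + D, fun x hx => (norm_add_le _ _).trans (add_le_add (hC x hx) (hD x hx))⟩

theorem mul {R : Type*} [SeminormedRing R] {f g : X → R}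
    (hf : BoundedContinuousOn f s) (hg : BoundedContinuousOn g s) :
    BoundedContinuousOn (fun x => f x * g x) s := by
  obtain ⟨hf, C, hC⟩ := hf
  obtain ⟨hg, D, hD⟩ := hg
  refine ⟨hf.mul hg, C * D, fun x hx => (norm_mul_le _ _).trans ?_⟩
  exact mul_le_mul (hC x hx) (hD x hx) (norm_nonneg _) ((norm_nonneg _).trans (hC x hx))

theorem div {𝕜 : Type*} [NormedDivisionRing 𝕜] {f g : X → 𝕜} {c : ℝ}
    (hf : BoundedContinuousOn f s) (hg : ContinuousOn g s) (hc : 0 < c)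
    (hgc : ∀ x ∈ s, c ≤ ‖g x‖) : BoundedContinuousOn (fun x => f x / g x) s := by
  obtain ⟨hf, C, hC⟩ := hf
  have hg₀ : ∀ x ∈ s, g x ≠ 0 := fun x hx => norm_pos_iff.mp (hc.trans_le (hgc x hx))
  refine ⟨hf.div hg hg₀, C / c, fun x hx => ?_⟩
  rw [norm_div]
  calc ‖f x‖ / ‖g x‖ ≤ ‖f x‖ / c := div_le_div_of_nonneg_left (norm_nonneg _) hc (hgc x hx)
    _ ≤ C / c := div_le_div_of_nonneg_right (hC x hx) hc.le

theorem apply {ι : Type*} [Fintype ι] {f : X → ι → E}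
    (hf : BoundedContinuousOn f s) (i : ι) : BoundedContinuousOn (fun x => f x i) s :=
  ⟨(continuous_apply i).comp_continuousOn hf.1,
    hf.2.imp fun _ hC x hx => (norm_le_pi_norm (f x) i).trans (hC x hx)⟩

theorem finsetSum {ι : Type*} (u : Finset ι) {f : ι → X → E}
    (hf : ∀ i ∈ u, BoundedContinuousOn (f i) s) :
    BoundedContinuousOn (fun x => ∑ i ∈ u, f i x) s := by
  classical
  induction u using Finset.induction_on with
  | empty => simpa using const (0 : E)
  | insert i u hi ih =>
    simp only [Finset.sum_insert hi]
    exact (hf i (u.mem_insert_self i)).add (ih fun j hj => hf j (Finset.mem_insert_of_mem hj))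

theorem dotProduct {ι R : Type*} [Fintype ι] [SeminormedRing R] {v w : X → ι → R}
    (hv : BoundedContinuousOn v s) (hw : BoundedContinuousOn w s) :
    BoundedContinuousOn (fun x => v x ⬝ᵥ w x) s :=
  finsetSum _ fun i _ => (hv.apply i).mul (hw.apply i)

theorem integrableOn [MeasurableSpace X] [OpensMeasurableSpace X] {F : Type*}
    [NormedAddCommGroup F] [SecondCountableTopologyEither X F] {f : X → F} {μ : Measure X}
    (hf : BoundedContinuousOn f s) (hs : MeasurableSet s) (hμs : μ s ≠ ⊤) :
    IntegrableOn f s μ := by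
  obtain ⟨hf, C, hC⟩ := hf
  refine ⟨hf.aestronglyMeasurable hs, .restrict_of_bounded (C := C) hμs.lt_top ?_⟩
  filter_upwards [ae_restrict_mem hs] with x hx using hC x hx

end BoundedContinuousOn

theorem HasDerivWithinAt.dotProduct {𝕜 ι : Type*} [NontriviallyNormedField 𝕜] [Fintype ι]
    {f g : 𝕜 → ι → 𝕜} {f' g' : ι → 𝕜} {s : Set 𝕜} {t : 𝕜}
    (hf : HasDerivWithinAt f f' s t) (hg : HasDerivWithinAt g g' s t) :
    HasDerivWithinAt (fun u => f u ⬝ᵥ g u) (f' ⬝ᵥ g t + f t ⬝ᵥ g') s t := by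
  have hfg := HasDerivWithinAt.fun_sum (u := Finset.univ) fun i _ =>
    (hasDerivWithinAt_pi.mp hf i).mul (hasDerivWithinAt_pi.mp hg i)
  exact hfg.congr_deriv Finset.sum_add_distrib

theorem integral_mul_dotProduct_eq_of_darcy {X ι : Type*} [MeasurableSpace X] [Fintype ι]
    {ν : Measure X} {s : Set X} {μ : ℝ} {a q d : X → ℝ} {w w' g : X → ι → ℝ}
    {A : X → Matrix ι ι ℝ} (hs : MeasurableSet s)
    (hdarcy : ∀ x ∈ s, a x • w' x + μ • (A x *ᵥ w x) + g x = 0)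
    (hparts : ∫ x in s, (w x ⬝ᵥ g x + q x * d x) ∂ν = 0)
    (hw' : IntegrableOn (fun x => a x * (w' x ⬝ᵥ w x)) s ν)
    (hg : IntegrableOn (fun x => w x ⬝ᵥ g x) s ν)
    (hd : IntegrableOn (fun x => q x * d x) s ν) :
    ∫ x in s, a x * (w' x ⬝ᵥ w x) ∂ν
      = -(∫ x in s, μ * ((A x *ᵥ w x) ⬝ᵥ w x) ∂ν) + ∫ x in s, q x * d x ∂ν := by
  have hfriction : EqOn (fun x => μ * ((A x *ᵥ w x) ⬝ᵥ w x))
      (fun x => -(a x * (w' x ⬝ᵥ w x)) - w x ⬝ᵥ g x) s := fun x hx => by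
    have h := congrArg (· ⬝ᵥ w x) (hdarcy x hx)
    simp only [add_dotProduct, smul_dotProduct, smul_eq_mul, zero_dotProduct] at h
    dsimp only
    rw [dotProduct_comm (w x)]
    linarith
  have hw'_neg : IntegrableOn (fun x => -(a x * (w' x ⬝ᵥ w x))) s ν := hw'.neg
  rw [setIntegral_congr_fun hs hfriction, integral_sub hw'_neg hg, integral_neg]
  rw [integral_add hg hd] at hparts
  linarith

theorem HasDerivWithinAt.div_two_mul_dotProduct_self {ι : Type*} [Fintype ι] {w : ℝ → ι → ℝ}
    {w' : ι → ℝ} {s : Set ℝ} {t : ℝ} (hw : HasDerivWithinAt w w' s t) (a b : ℝ) :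
    HasDerivWithinAt (fun u => a / (2 * b) * (w u ⬝ᵥ w u)) (a / b * (w' ⬝ᵥ w t)) s t :=
  ((hw.dotProduct hw).const_mul _).congr_deriv (by rw [dotProduct_comm (w t)]; ring)

namespace DPP

variable (S : DPP) {t : ℝ}

theorem boundedContinuousOn_γ_div_φ₁ : BoundedContinuousOn (fun x => S.γ / S.φ₁ x) S.Ω := by
  obtain ⟨c, hc, _, hφ⟩ := S.hφ₁bdd
  exact (BoundedContinuousOn.const S.γ).div S.hφ₁cont hc fun x hx =>
    (hφ x hx).1.trans (le_abs_self _)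

theorem boundedContinuousOn_γ_div_φ₂ : BoundedContinuousOn (fun x => S.γ / S.φ₂ x) S.Ω := by
  obtain ⟨c, hc, _, hφ⟩ := S.hφ₂bdd
  exact (BoundedContinuousOn.const S.γ).div S.hφ₂cont hc fun x hx =>
    (hφ x hx).1.trans (le_abs_self _)

theorem integrableOn_of_boundedContinuousOn {f : (Fin 3 → ℝ) × ℝ → ℝ}
    (hf : BoundedContinuousOn f (S.Ω ×ˢ Icc 0 S.T)) (ht : t ∈ Icc 0 S.T) :
    IntegrableOn (fun x => f (x, t)) S.Ω :=
  (hf.curry_left ht).integrableOn S.hΩopen.measurableSet S.hΩbdd.measure_lt_top.ne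

theorem boundedContinuousOn_energyRate₁ :
    BoundedContinuousOn
      (fun p : (Fin 3 → ℝ) × ℝ => S.γ / S.φ₁ p.1 * (S.dw₁ p.1 p.2 ⬝ᵥ S.w₁ p.1 p.2))
      (S.Ω ×ˢ Icc 0 S.T) :=
  (S.boundedContinuousOn_γ_div_φ₁.comp_fst _).mul
    ((BoundedContinuousOn.uncurry_of_bound S.hdw₁cont S.hdw₁bdd).dotProduct
      (BoundedContinuousOn.uncurry_of_bound S.hw₁cont S.hw₁bdd))

theorem boundedContinuousOn_energyRate₂ :
    BoundedContinuousOn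
      (fun p : (Fin 3 → ℝ) × ℝ => S.γ / S.φ₂ p.1 * (S.dw₂ p.1 p.2 ⬝ᵥ S.w₂ p.1 p.2))
      (S.Ω ×ˢ Icc 0 S.T) :=
  (S.boundedContinuousOn_γ_div_φ₂.comp_fst _).mul
    ((BoundedContinuousOn.uncurry_of_bound S.hdw₂cont S.hdw₂bdd).dotProduct
      (BoundedContinuousOn.uncurry_of_bound S.hw₂cont S.hw₂bdd))

theorem integrableOn_energyRate₁ (ht : t ∈ Icc 0 S.T) :
    IntegrableOn (fun x => S.γ / S.φ₁ x * (S.dw₁ x t ⬝ᵥ S.w₁ x t)) S.Ω :=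
  S.integrableOn_of_boundedContinuousOn S.boundedContinuousOn_energyRate₁ ht

theorem integrableOn_energyRate₂ (ht : t ∈ Icc 0 S.T) :
    IntegrableOn (fun x => S.γ / S.φ₂ x * (S.dw₂ x t ⬝ᵥ S.w₂ x t)) S.Ω :=
  S.integrableOn_of_boundedContinuousOn S.boundedContinuousOn_energyRate₂ ht

theorem boundedContinuousOn_energyDensity :
    BoundedContinuousOn (fun p : (Fin 3 → ℝ) × ℝ =>
      S.γ / (2 * S.φ₁ p.1) * (S.w₁ p.1 p.2 ⬝ᵥ S.w₁ p.1 p.2)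
        + S.γ / (2 * S.φ₂ p.1) * (S.w₂ p.1 p.2 ⬝ᵥ S.w₂ p.1 p.2)) (S.Ω ×ˢ Icc 0 S.T) := by
  have hw₁ := BoundedContinuousOn.uncurry_of_bound S.hw₁cont S.hw₁bdd
  have hw₂ := BoundedContinuousOn.uncurry_of_bound S.hw₂cont S.hw₂bdd
  have hhalf := BoundedContinuousOn.const (s := S.Ω ×ˢ Icc 0 S.T) (1 / 2 : ℝ)
  refine (((hhalf.mul (S.boundedContinuousOn_γ_div_φ₁.comp_fst _)).mul (hw₁.dotProduct hw₁)).add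
    ((hhalf.mul (S.boundedContinuousOn_γ_div_φ₂.comp_fst _)).mul (hw₂.dotProduct hw₂))).congr
    fun p _ => ?_
  ring

theorem hasDerivWithinAt_integral {F F' : (Fin 3 → ℝ) → ℝ → ℝ}
    (hF : BoundedContinuousOn (fun p : (Fin 3 → ℝ) × ℝ => F p.1 p.2) (S.Ω ×ˢ Icc 0 S.T))
    (hF' : BoundedContinuousOn (fun p : (Fin 3 → ℝ) × ℝ => F' p.1 p.2) (S.Ω ×ˢ Icc 0 S.T))
    (hFF' : ∀ x ∈ S.Ω, ∀ s ∈ Icc 0 S.T, HasDerivWithinAt (F x) (F' x s) (Icc 0 S.T) s)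
    (ht : t ∈ Icc 0 S.T) :
    HasDerivWithinAt (fun s => ∫ x in S.Ω, F x s) (∫ x in S.Ω, F' x t) (Icc 0 S.T) t :=
  S.leibniz F F' hFF' hF.1 hF'.1 (hF.2.imp fun _ hC x hx s hs => hC (x, s) ⟨hx, hs⟩)
    (hF'.2.imp fun _ hC x hx s hs => hC (x, s) ⟨hx, hs⟩) t ht

theorem hasDerivWithinAt_E (ht : t ∈ Icc 0 S.T) :
    HasDerivWithinAt S.E (∫ x in S.Ω, (S.γ / S.φ₁ x * (S.dw₁ x t ⬝ᵥ S.w₁ x t)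
      + S.γ / S.φ₂ x * (S.dw₂ x t ⬝ᵥ S.w₂ x t))) (Icc 0 S.T) t :=
  S.hasDerivWithinAt_integral S.boundedContinuousOn_energyDensity
    (S.boundedContinuousOn_energyRate₁.add S.boundedContinuousOn_energyRate₂)
    (fun x hx s hs => ((S.hdw₁ x hx s hs).div_two_mul_dotProduct_self _ _).add
      ((S.hdw₂ x hx s hs).div_two_mul_dotProduct_self _ _)) ht

theorem integral_energyRate₁ (ht : t ∈ Icc 0 S.T) :
    ∫ x in S.Ω, S.γ / S.φ₁ x * (S.dw₁ x t ⬝ᵥ S.w₁ x t)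
      = -(∫ x in S.Ω, S.μ * (((S.K₁ x)⁻¹ *ᵥ S.w₁ x t) ⬝ᵥ S.w₁ x t))
        + ∫ x in S.Ω, S.q₁ x t * divOf (S.Jw₁ x t) := by
  have hw := BoundedContinuousOn.uncurry_of_bound S.hw₁cont S.hw₁bdd
  have hgq := BoundedContinuousOn.uncurry_of_bound S.hgq₁cont S.hgq₁bdd
  have hq := BoundedContinuousOn.uncurry_of_bound S.hq₁cont S.hq₁bdd
  have hdiv := BoundedContinuousOn.uncurry_of_bound (f := fun x s => divOf (S.Jw₁ x s))
    S.hdivw₁cont S.hdivw₁bdd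
  exact integral_mul_dotProduct_eq_of_darcy S.hΩopen.measurableSet
    (fun x hx => S.pde₁ x hx t ht) (S.H1₁ t ht)
    (S.integrableOn_energyRate₁ ht)
    (S.integrableOn_of_boundedContinuousOn (hw.dotProduct hgq) ht)
    (S.integrableOn_of_boundedContinuousOn (hq.mul hdiv) ht)

theorem integral_energyRate₂ (ht : t ∈ Icc 0 S.T) :
    ∫ x in S.Ω, S.γ / S.φ₂ x * (S.dw₂ x t ⬝ᵥ S.w₂ x t)
      = -(∫ x in S.Ω, S.μ * (((S.K₂ x)⁻¹ *ᵥ S.w₂ x t) ⬝ᵥ S.w₂ x t))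
        + ∫ x in S.Ω, S.q₂ x t * divOf (S.Jw₂ x t) := by
  have hw := BoundedContinuousOn.uncurry_of_bound S.hw₂cont S.hw₂bdd
  have hgq := BoundedContinuousOn.uncurry_of_bound S.hgq₂cont S.hgq₂bdd
  have hq := BoundedContinuousOn.uncurry_of_bound S.hq₂cont S.hq₂bdd
  have hdiv := BoundedContinuousOn.uncurry_of_bound (f := fun x s => divOf (S.Jw₂ x s))
    S.hdivw₂cont S.hdivw₂bdd
  exact integral_mul_dotProduct_eq_of_darcy S.hΩopen.measurableSet
    (fun x hx => S.pde₂ x hx t ht) (S.H1₂ t ht)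
    (S.integrableOn_energyRate₂ ht)
    (S.integrableOn_of_boundedContinuousOn (hw.dotProduct hgq) ht)
    (S.integrableOn_of_boundedContinuousOn (hq.mul hdiv) ht)

theorem integral_pressureWork (ht : t ∈ Icc 0 S.T) :
    (∫ x in S.Ω, S.q₁ x t * divOf (S.Jw₁ x t)) + ∫ x in S.Ω, S.q₂ x t * divOf (S.Jw₂ x t)
      = -∫ x in S.Ω, (S.β / S.μ) * (S.q₁ x t - S.q₂ x t) ^ 2 := by
  have hq₁ := BoundedContinuousOn.uncurry_of_bound S.hq₁cont S.hq₁bdd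
  have hq₂ := BoundedContinuousOn.uncurry_of_bound S.hq₂cont S.hq₂bdd
  have hdiv₁ := BoundedContinuousOn.uncurry_of_bound (f := fun x s => divOf (S.Jw₁ x s))
    S.hdivw₁cont S.hdivw₁bdd
  have hdiv₂ := BoundedContinuousOn.uncurry_of_bound (f := fun x s => divOf (S.Jw₂ x s))
    S.hdivw₂cont S.hdivw₂bdd
  have hwork₁ : IntegrableOn (fun x => S.q₁ x t * divOf (S.Jw₁ x t)) S.Ω :=
    S.integrableOn_of_boundedContinuousOn (hq₁.mul hdiv₁) ht
  have hwork₂ : IntegrableOn (fun x => S.q₂ x t * divOf (S.Jw₂ x t)) S.Ω :=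
    S.integrableOn_of_boundedContinuousOn (hq₂.mul hdiv₂) ht
  rw [← integral_add hwork₁ hwork₂, ← integral_neg]
  refine setIntegral_congr_fun S.hΩopen.measurableSet fun x hx => ?_
  rw [S.mass₁ x hx t ht, S.mass₂ x hx t ht]
  ring

end DPP

/-- **Dissipation identity inside the proof of Proposition 3.2**: for the homogeneous DPP
difference system, for every `t ∈ [0,T]`,
`E′(t) = −∫_Ω μ (K₁⁻¹ w₁)·w₁ dx − ∫_Ω μ (K₂⁻¹ w₂)·w₂ dx − ∫_Ω (β/μ)(q₁ − q₂)² dx`. -/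
theorem stmt_2 (S : DPP) :
    ∀ t ∈ Icc (0:ℝ) S.T,
      derivWithin S.E (Icc (0:ℝ) S.T) t =
        -(∫ x in S.Ω, S.μ * (((S.K₁ x)⁻¹ *ᵥ S.w₁ x t) ⬝ᵥ S.w₁ x t))
          - (∫ x in S.Ω, S.μ * (((S.K₂ x)⁻¹ *ᵥ S.w₂ x t) ⬝ᵥ S.w₂ x t))
          - (∫ x in S.Ω, (S.β / S.μ) * (S.q₁ x t - S.q₂ x t) ^ 2) := by
  intro t ht
  rw [(S.hasDerivWithinAt_E ht).derivWithin (uniqueDiffOn_Icc S.hT t ht),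
    integral_add (S.integrableOn_energyRate₁ ht) (S.integrableOn_energyRate₂ ht),
    S.integral_energyRate₁ ht, S.integral_energyRate₂ ht]
  linarith [S.integral_pressureWork ht]
end

section
/- Let T > 0, ρ > 0, γ > 0, μ > 0 be real numbers and K a symmetric invertible 3×3 real matrix. Let a, b : [0,T] → ℝ³ be continuously differentiable and g_a, g_b, f_a, f_b : [0,T] → ℝ³ continuous, and suppose ρ a′(t) + μ K⁻¹ a(t) + g_a(t) = γ f_a(t) and ρ b′(t) + μ K⁻¹ b(t) + g_b(t) = γ f_b(t) for all t ∈ [0,T]. Then for every t ∈ [0,T]: [ (b ⋆ γ f_a)(t) + ρ b(t)·a(0) ] − [ (a ⋆ γ f_b)(t) + ρ a(t)·b(0) ] = (b ⋆ g_a)(t) − (a ⋆ g_b)(t), where · is the Euclidean dot product. -/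
/-!
Substituting the momentum equations into the convolutions with `γ f` splits each of them into an
inertial, a drag and a body-force part. The drag parts coincide because convolution is commutative
and `K⁻¹` is symmetric. The inertial parts `ρ (b ⋆ a')` and `ρ (a ⋆ b')` differ by the boundary
term of an integration by parts of `τ ↦ b(t - τ) · a(τ)`, namely `ρ (b(0)·a(t) - b(t)·a(0))`,
which is cancelled by the initial-data terms.
-/

open Set Matrix

/-- The convolution `f ⋆ g` of the paper, with the dot product as the pointwise product. -/
noncomputable def convD (f g : ℝ → (Fin 3 → ℝ)) (t : ℝ) : ℝ :=
  ∫ τ in (0 : ℝ)..t, f (t - τ) ⬝ᵥ g τ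

open MeasureTheory intervalIntegral

theorem Matrix.IsSymm.dotProduct_mulVec_comm {n R : Type*} [Fintype n] [CommSemiring R]
    {M : Matrix n n R} (hM : M.IsSymm) (u w : n → R) :
    u ⬝ᵥ (M *ᵥ w) = w ⬝ᵥ (M *ᵥ u) := by
  rw [dotProduct_mulVec, ← hM.eq, vecMul_transpose, hM.eq, dotProduct_comm]

theorem ContinuousOn.dotProduct {n X R : Type*} [Fintype n] [TopologicalSpace X]
    [TopologicalSpace R] [NonUnitalNonAssocSemiring R] [IsTopologicalSemiring R]
    {u v : X → n → R} {s : Set X} (hu : ContinuousOn u s) (hv : ContinuousOn v s) :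
    ContinuousOn (fun x => u x ⬝ᵥ v x) s :=
  (continuous_fst.dotProduct continuous_snd).comp_continuousOn (hu.prodMk hv)

theorem HasDerivAt.dotProduct {n 𝕜 : Type*} [Fintype n] [NontriviallyNormedField 𝕜]
    {u v : 𝕜 → n → 𝕜} {u' v' : n → 𝕜} {x : 𝕜} (hu : HasDerivAt u u' x) (hv : HasDerivAt v v' x) :
    HasDerivAt (fun y => u y ⬝ᵥ v y) (u' ⬝ᵥ v x + u x ⬝ᵥ v') x := by
  simp only [_root_.dotProduct, ← Finset.sum_add_distrib]
  exact HasDerivAt.fun_sum fun i _ => (hasDerivAt_pi.1 hu i).fun_mul (hasDerivAt_pi.1 hv i)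

theorem convD_comm (f g : ℝ → Fin 3 → ℝ) (t : ℝ) : convD f g t = convD g f t := by
  have h := integral_comp_sub_left (a := 0) (b := t) (fun τ => g (t - τ) ⬝ᵥ f τ) t
  simp only [sub_sub_cancel, sub_self, sub_zero] at h
  rw [convD, convD, ← h]
  exact integral_congr fun τ _ => dotProduct_comm _ _

theorem convD_mulVec_comm_of_isSymm {M : Matrix (Fin 3) (Fin 3) ℝ} (hM : M.IsSymm)
    (a b : ℝ → Fin 3 → ℝ) (t : ℝ) :
    convD b (fun s => M *ᵥ a s) t = convD a (fun s => M *ᵥ b s) t := by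
  rw [convD_comm a]
  exact integral_congr fun τ _ => (hM.dotProduct_mulVec_comm _ _).trans (dotProduct_comm _ _)

section Interval

variable {T t : ℝ}

theorem continuousOn_convD_integrand {f g : ℝ → Fin 3 → ℝ}
    (hf : ContinuousOn f (Icc 0 T)) (hg : ContinuousOn g (Icc 0 T)) (ht : t ∈ Icc 0 T) :
    ContinuousOn (fun τ => f (t - τ) ⬝ᵥ g τ) (Icc 0 t) := by
  have hreflect : MapsTo (fun τ => t - τ) (Icc 0 t) (Icc 0 T) := fun τ hτ =>
    ⟨by linarith [hτ.2], by linarith [hτ.1, ht.2]⟩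
  exact (hf.comp (continuousOn_const.sub continuousOn_id) hreflect).dotProduct
    (hg.mono (Icc_subset_Icc_right ht.2))

theorem intervalIntegrable_convD_integrand {f g : ℝ → Fin 3 → ℝ}
    (hf : ContinuousOn f (Icc 0 T)) (hg : ContinuousOn g (Icc 0 T)) (ht : t ∈ Icc 0 T) :
    IntervalIntegrable (fun τ => f (t - τ) ⬝ᵥ g τ) volume 0 t :=
  (continuousOn_convD_integrand hf hg ht).intervalIntegrable_of_Icc ht.1

theorem convD_deriv_sub_convD_deriv {a b a' b' : ℝ → Fin 3 → ℝ}
    (ha : ∀ s ∈ Icc 0 T, HasDerivWithinAt a (a' s) (Icc 0 T) s)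
    (hb : ∀ s ∈ Icc 0 T, HasDerivWithinAt b (b' s) (Icc 0 T) s)
    (ha' : ContinuousOn a' (Icc 0 T)) (hb' : ContinuousOn b' (Icc 0 T)) (ht : t ∈ Icc 0 T) :
    convD b a' t - convD a b' t = b 0 ⬝ᵥ a t - b t ⬝ᵥ a 0 := by
  have haC : ContinuousOn a (Icc 0 T) := fun s hs => (ha s hs).continuousWithinAt
  have hbC : ContinuousOn b (Icc 0 T) := fun s hs => (hb s hs).continuousWithinAt
  have hint₁ := intervalIntegrable_convD_integrand hbC ha' ht
  have hint₂ := intervalIntegrable_convD_integrand hb' haC ht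
  have hderiv : ∀ x ∈ Ioo 0 t, HasDerivAt (fun τ => b (t - τ) ⬝ᵥ a τ)
      (b (t - x) ⬝ᵥ a' x - b' (t - x) ⬝ᵥ a x) x := by
    intro x hx
    have hbx := (hb (t - x) ⟨by linarith [hx.2], by linarith [hx.1, ht.2]⟩).hasDerivAt
      (Icc_mem_nhds (by linarith [hx.2]) (by linarith [hx.1, ht.2]))
    have hax := (ha x ⟨hx.1.le, by linarith [hx.2, ht.2]⟩).hasDerivAt
      (Icc_mem_nhds hx.1 (by linarith [hx.2, ht.2]))
    simpa only [neg_dotProduct, neg_add_eq_sub] using (hbx.comp_const_sub t x).dotProduct hax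
  have hftc := integral_eq_sub_of_hasDerivAt_of_le ht.1
    (continuousOn_convD_integrand hbC haC ht) hderiv (hint₁.sub hint₂)
  rw [integral_sub hint₁ hint₂, ← convD, ← convD, convD_comm b'] at hftc
  simpa only [sub_self, sub_zero] using hftc

theorem convD_eq_of_momentum {M : Matrix (Fin 3) (Fin 3) ℝ} {ρ γ μ : ℝ}
    {w v v' g f : ℝ → Fin 3 → ℝ} (hw : ContinuousOn w (Icc 0 T))
    (hv : ContinuousOn v (Icc 0 T)) (hv' : ContinuousOn v' (Icc 0 T))
    (hg : ContinuousOn g (Icc 0 T))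
    (heq : ∀ s ∈ Icc 0 T, ρ • v' s + μ • (M *ᵥ v s) + g s = γ • f s) (ht : t ∈ Icc 0 T) :
    convD w (fun s => γ • f s) t
      = ρ * convD w v' t + μ * convD w (fun s => M *ᵥ v s) t + convD w g t := by
  have hMv : ContinuousOn (fun s => M *ᵥ v s) (Icc 0 T) :=
    (continuous_const.matrix_mulVec continuous_id).comp_continuousOn hv
  have hint₁ := (intervalIntegrable_convD_integrand hw hv' ht).const_mul ρ
  have hint₂ := (intervalIntegrable_convD_integrand hw hMv ht).const_mul μ
  have hint₃ := intervalIntegrable_convD_integrand hw hg ht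
  simp only [convD, ← intervalIntegral.integral_const_mul]
  rw [← integral_add hint₁ hint₂, ← integral_add (hint₁.add hint₂) hint₃]
  refine integral_congr fun τ hτ => ?_
  rw [uIcc_of_le ht.1] at hτ
  simp only [← heq τ (Icc_subset_Icc_right ht.2 hτ), dotProduct_add, dotProduct_smul, smul_eq_mul]

end Interval

theorem stmt_10_general (T ρ γ μ : ℝ)
    (K : Matrix (Fin 3) (Fin 3) ℝ) (hKsym : K.IsSymm)
    (a b a' b' ga gb fa fb : ℝ → (Fin 3 → ℝ))
    (ha : ∀ t ∈ Icc (0 : ℝ) T, HasDerivWithinAt a (a' t) (Icc (0 : ℝ) T) t)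
    (hb : ∀ t ∈ Icc (0 : ℝ) T, HasDerivWithinAt b (b' t) (Icc (0 : ℝ) T) t)
    (ha' : ContinuousOn a' (Icc (0 : ℝ) T))
    (hb' : ContinuousOn b' (Icc (0 : ℝ) T))
    (hga : ContinuousOn ga (Icc (0 : ℝ) T))
    (hgb : ContinuousOn gb (Icc (0 : ℝ) T))
    (heqa : ∀ t ∈ Icc (0 : ℝ) T, ρ • a' t + μ • (K⁻¹ *ᵥ a t) + ga t = γ • fa t)
    (heqb : ∀ t ∈ Icc (0 : ℝ) T, ρ • b' t + μ • (K⁻¹ *ᵥ b t) + gb t = γ • fb t) :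
    ∀ t ∈ Icc (0 : ℝ) T,
      (convD b (fun s => γ • fa s) t + ρ * (b t ⬝ᵥ a 0))
        - (convD a (fun s => γ • fb s) t + ρ * (a t ⬝ᵥ b 0))
      = convD b ga t - convD a gb t := by
  intro t ht
  have haC : ContinuousOn a (Icc 0 T) := fun s hs => (ha s hs).continuousWithinAt
  have hbC : ContinuousOn b (Icc 0 T) := fun s hs => (hb s hs).continuousWithinAt
  rw [convD_eq_of_momentum hbC haC ha' hga heqa ht, convD_eq_of_momentum haC hbC hb' hgb heqb ht,
    convD_mulVec_comm_of_isSymm hKsym.inv a b t]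
  linear_combination
    ρ * convD_deriv_sub_convD_deriv ha hb ha' hb' ht + ρ * dotProduct_comm (b 0) (a t)

/-- **Pointwise form of the key intermediate identity Eq. (58)** in the proof of the
reciprocal relation (Theorem 4.1 of the paper).  For two solutions `a, b` of the momentum
equation `ρ v′ + μ K⁻¹ v + g_v = γ f_v`, the inertial and drag convolution terms cancel
(by symmetry of `K` and the initial-data identity), leaving
`[(b ⋆ γ f_a)(t) + ρ b(t)·a(0)] − [(a ⋆ γ f_b)(t) + ρ a(t)·b(0)] = (b ⋆ g_a)(t) − (a ⋆ g_b)(t)`. -/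
theorem stmt_10 (T ρ γ μ : ℝ) (hT : 0 < T) (hρ : 0 < ρ) (hγ : 0 < γ) (hμ : 0 < μ)
    (K : Matrix (Fin 3) (Fin 3) ℝ) (hKsym : K.IsSymm) (hKinv : IsUnit K.det)
    (a b a' b' ga gb fa fb : ℝ → (Fin 3 → ℝ))
    (ha : ∀ t ∈ Icc (0 : ℝ) T, HasDerivWithinAt a (a' t) (Icc (0 : ℝ) T) t)
    (hb : ∀ t ∈ Icc (0 : ℝ) T, HasDerivWithinAt b (b' t) (Icc (0 : ℝ) T) t)
    (ha' : ContinuousOn a' (Icc (0 : ℝ) T))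
    (hb' : ContinuousOn b' (Icc (0 : ℝ) T))
    (hga : ContinuousOn ga (Icc (0 : ℝ) T))
    (hgb : ContinuousOn gb (Icc (0 : ℝ) T))
    (hfa : ContinuousOn fa (Icc (0 : ℝ) T))
    (hfb : ContinuousOn fb (Icc (0 : ℝ) T))
    (heqa : ∀ t ∈ Icc (0 : ℝ) T, ρ • a' t + μ • (K⁻¹ *ᵥ a t) + ga t = γ • fa t)
    (heqb : ∀ t ∈ Icc (0 : ℝ) T, ρ • b' t + μ • (K⁻¹ *ᵥ b t) + gb t = γ • fb t) :
    ∀ t ∈ Icc (0 : ℝ) T,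
      (convD b (fun s => γ • fa s) t + ρ * (b t ⬝ᵥ a 0))
        - (convD a (fun s => γ • fb s) t + ρ * (a t ⬝ᵥ b 0))
      = convD b ga t - convD a gb t :=
  stmt_10_general T ρ γ μ K hKsym a b a' b' ga gb fa fb ha hb ha' hb' hga hgb heqa heqb
end
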